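/- Let μ_x, μ_y, θ_y > 0, α ∈ (0, 1], η_z = μ_x/2, η_y = min{1/(2μ_y), θ_y/(2α)}. Let z^k, z_f^k, z_g^k, z_f^{k+1}, z^{k+1}, z*, x_f^{k+1} ∈ ℝ^{d_x} and y^k, y_f^k, y_g^k, y_f^{k+1}, y^{k+1}, y*, w_f^{k+1} ∈ ℝ^{d_y} satisfy: z_g^k = α z^k + (1−α) z_f^k, y_g^k = α y^k + (1−α) y_f^k, z^{k+1} = z^k + η_z μ_x^{−1}(z_f^{k+1} − z^k) − η_z(x_f^{k+1} + μ_x^{−1} z_f^{k+1}), y^{k+1} = y^k + η_y μ_y(y_f^{k+1} − y^k) − η_y(w_f^{k+1} + μ_y y_f^{k+1}), and the inexactness condition (8/μ_x)‖z_f^{k+1} + (μ_x/2)(x_f^{k+1} − μ_x^{−1} z_g^k)‖² + θ_y‖w_f^{k+1} + μ_y y_f^{k+1} + θ_y^{−1}(y_f^{k+1} − y_g^k)‖² ≤ (μ_x/8)‖x_f^{k+1} + μ_x^{−1} z_g^k‖² + θ_y^{−1}‖y_f^{k+1} − y_g^k‖². Let P : ℝ^{d_x} × ℝ^{d_y} →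 ℝ ∪ {+∞} be a function which is finite at (z_f^k, y_f^k), (z_f^{k+1}, y_f^{k+1}) and (z*, y*), attains its minimum at (z*, y*), and satisfies the strong subgradient inequality P(z, y) ≥ P(z_f^{k+1}, y_f^{k+1}) + ⟨x_f^{k+1} + μ_x^{−1} z_f^{k+1}, z − z_f^{k+1}⟩ + ⟨w_f^{k+1} + μ_y y_f^{k+1}, y − y_f^{k+1}⟩ + (1/(2μ_x))‖z − z_f^{k+1}‖² + (μ_y/2)‖y − y_f^{k+1}‖² for all (z, y). Define the Lyapunov function L^k = (1/η_z)‖z^k − z*‖² + (1/η_y)‖y^k − y*‖² + (2/α)(P(z_f^k, y_f^k) − P(z*, y*)) and L^{k+1} analogously. Then L^{k+1} ≤ (1 − 1/max{2/α, 2α/(θ_y μ_y)}) · L^k. -/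

import Mathlib

/-!
Write `a = x_f^{k+1} + μ_x⁻¹ z_f^{k+1}` and `b = w_f^{k+1} + μ_y y_f^{k+1}` for the subgradient.
Both updates have the form `(1 - t) p + t q - η g` with `t ≤ 1/2`, so the new squared distances to
the optimum are bounded by the same convex combination of the old ones plus a cross term
`-2η⟪z^k - z*, a⟫` and a term `2η²‖a‖²`. Splitting `α (z^k - z*)` along
`z_g^k = α z^k + (1 - α) z_f^k` turns the cross terms into the two subgradient gaps at `(z*, y*)`
and at `(z_f^k, y_f^k)`, which the strong subgradient inequality converts into values of `P`, plus
the coupling term `⟪a, z_g^k - z_f^{k+1}⟫ + ⟪b, y_g^k - y_f^{k+1}⟫`. The inexactness condition says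
exactly that the coupling term dominates the `‖a‖²` and `‖b‖²` terms. What remains is
`L^{k+1} ≤ ½ (z-part of L^k) + (1 - η_y μ_y) (y-part) + (1 - α) (gap part)`, and each of the three
factors is at most `1 - 1 / max (2/α) (2α/(θ_y μ_y))`.
-/

open scoped RealInnerProductSpace

section InnerProductSpace

variable {E F : Type*} [NormedAddCommGroup E] [InnerProductSpace ℝ E]
  [NormedAddCommGroup F] [InnerProductSpace ℝ F]

theorem norm_sq_convex_comb_sub_smul_le {t : ℝ} (ht0 : 0 ≤ t) (ht : t ≤ 1 / 2) (η : ℝ)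
    (p q b : E) :
    ‖(1 - t) • p + t • q - η • b‖ ^ 2
      ≤ (1 - t) * ‖p‖ ^ 2 + t * ‖q‖ ^ 2 - 2 * η * ⟪p, b⟫ + 2 * η ^ 2 * ‖b‖ ^ 2 := by
  have hd : 0 ≤ t * (1 - 2 * t) * ‖q - p‖ ^ 2 := by
    have : 0 ≤ 1 - 2 * t := by linarith
    positivity
  have hs : 0 ≤ ‖t • (q - p) + η • b‖ ^ 2 := sq_nonneg _
  simp only [← real_inner_self_eq_norm_sq, inner_add_left, inner_add_right, inner_sub_left,
    inner_sub_right, real_inner_smul_left, real_inner_smul_right, real_inner_comm p q,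
    real_inner_comm p b, real_inner_comm q b] at hd hs ⊢
  linear_combination hd + hs

theorem coupling_le_of_inexact {μ θ : ℝ} (hμ : 0 < μ) (hθ : 0 < θ) {zf zg x : E} {yf yg b : F}
    (h : (8 / μ) * ‖zf + (μ / 2) • (x - μ⁻¹ • zg)‖ ^ 2 + θ * ‖b + θ⁻¹ • (yf - yg)‖ ^ 2
      ≤ (μ / 8) * ‖x + μ⁻¹ • zg‖ ^ 2 + θ⁻¹ * ‖yf - yg‖ ^ 2) :
    6 / 5 * μ * ‖x + μ⁻¹ • zf‖ ^ 2 + θ * ‖b‖ ^ 2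
      ≤ 2 * (⟪x + μ⁻¹ • zf, zg - zf⟫ + ⟪b, yg - yf⟫) := by
  set a := x + μ⁻¹ • zf
  set u := zg - zf
  set v := yg - yf
  have hz₁ : zf + (μ / 2) • (x - μ⁻¹ • zg) = (1 / 2 : ℝ) • (μ • a - u) := by
    simp only [a, u]; match_scalars <;> field_simp; ring
  have hz₂ : x + μ⁻¹ • zg = μ⁻¹ • (μ • a + u) := by
    simp only [a, u]; match_scalars <;> field_simp; ring
  have hy₁ : b + θ⁻¹ • (yf - yg) = b - θ⁻¹ • v := by simp only [v]; module
  have hy₂ : ‖yf - yg‖ = ‖v‖ := norm_sub_rev _ _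
  -- completing this square is where the constant `6 / 5` comes from
  have hsq : 0 ≤ ‖u - (3 / 5 * μ) • a‖ ^ 2 := sq_nonneg _
  rw [hz₁, hz₂, hy₁, hy₂] at h
  simp only [← real_inner_self_eq_norm_sq, inner_add_left, inner_add_right, inner_sub_left,
    inner_sub_right, real_inner_smul_left, real_inner_smul_right, real_inner_comm a u,
    real_inner_comm b v] at h hsq ⊢
  linear_combination (norm := skip) h + 15 / (8 * μ) * hsq
  field_simp
  linarith

theorem lyapunov_step_le {μx μy θy α ηz ηy : ℝ} (hμx : 0 < μx) (hμy : 0 < μy) (hθy : 0 < θy)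
    (hα0 : 0 < α) (hα1 : α ≤ 1) (hηy0 : 0 < ηy) (hηyμy : ηy * μy ≤ 1 / 2)
    (hηyθy : 2 * α * ηy ≤ θy) (hηz : ηz = μx / 2)
    {zk zfk zgk zfk1 zk1 zs xfk1 : E} {yk yfk ygk yfk1 yk1 ys wfk1 : F}
    (hzg : zgk = α • zk + (1 - α) • zfk)
    (hyg : ygk = α • yk + (1 - α) • yfk)
    (hzstep : zk1 = zk + (ηz * μx⁻¹) • (zfk1 - zk) - ηz • (xfk1 + μx⁻¹ • zfk1))
    (hystep : yk1 = yk + (ηy * μy) • (yfk1 - yk) - ηy • (wfk1 + μy • yfk1))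
    (hinexact :
      (8 / μx) * ‖zfk1 + (μx / 2) • (xfk1 - μx⁻¹ • zgk)‖ ^ 2
          + θy * ‖wfk1 + μy • yfk1 + θy⁻¹ • (yfk1 - ygk)‖ ^ 2
        ≤ (μx / 8) * ‖xfk1 + μx⁻¹ • zgk‖ ^ 2 + θy⁻¹ * ‖yfk1 - ygk‖ ^ 2)
    {P0 P1 Ps : ℝ}
    (hsub_star : P1 + (⟪xfk1 + μx⁻¹ • zfk1, zs - zfk1⟫ + ⟪wfk1 + μy • yfk1, ys - yfk1⟫
        + 1 / (2 * μx) * ‖zs - zfk1‖ ^ 2 + μy / 2 * ‖ys - yfk1‖ ^ 2) ≤ Ps)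
    (hsub_prev : P1 + (⟪xfk1 + μx⁻¹ • zfk1, zfk - zfk1⟫ + ⟪wfk1 + μy • yfk1, yfk - yfk1⟫
        + 1 / (2 * μx) * ‖zfk - zfk1‖ ^ 2 + μy / 2 * ‖yfk - yfk1‖ ^ 2) ≤ P0) :
    (1 / ηz) * ‖zk1 - zs‖ ^ 2 + (1 / ηy) * ‖yk1 - ys‖ ^ 2 + (2 / α) * (P1 - Ps)
      ≤ 1 / 2 * ((1 / ηz) * ‖zk - zs‖ ^ 2) + (1 - ηy * μy) * ((1 / ηy) * ‖yk - ys‖ ^ 2)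
        + (1 - α) * ((2 / α) * (P0 - Ps)) := by
  subst hηz
  set a := xfk1 + μx⁻¹ • zfk1
  set b := wfk1 + μy • yfk1
  have hcoup : 6 / 5 * μx * ‖a‖ ^ 2 + θy * ‖b‖ ^ 2 ≤ 2 * (⟪a, zgk - zfk1⟫ + ⟪b, ygk - yfk1⟫) :=
    coupling_le_of_inexact hμx hθy hinexact
  have hz : ‖zk1 - zs‖ ^ 2 ≤ 1 / 2 * ‖zk - zs‖ ^ 2 + 1 / 2 * ‖zfk1 - zs‖ ^ 2
      - μx * ⟪zk - zs, a⟫ + μx ^ 2 / 2 * ‖a‖ ^ 2 := by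
    have h := norm_sq_convex_comb_sub_smul_le (t := 1 / 2) (by norm_num) le_rfl (μx / 2)
      (zk - zs) (zfk1 - zs) a
    have hv : zk1 - zs
        = (1 - 1 / 2 : ℝ) • (zk - zs) + (1 / 2 : ℝ) • (zfk1 - zs) - (μx / 2) • a := by
      have : μx / 2 * μx⁻¹ = 1 / 2 := by field_simp
      rw [hzstep, this]
      module
    rw [hv]; linear_combination h
  have hy : ‖yk1 - ys‖ ^ 2 ≤ (1 - ηy * μy) * ‖yk - ys‖ ^ 2 + ηy * μy * ‖yfk1 - ys‖ ^ 2
      - 2 * ηy * ⟪yk - ys, b⟫ + 2 * ηy ^ 2 * ‖b‖ ^ 2 := by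
    have hv : yk1 - ys = (1 - ηy * μy) • (yk - ys) + (ηy * μy) • (yfk1 - ys) - ηy • b := by
      rw [hystep]; module
    rw [hv]
    exact norm_sq_convex_comb_sub_smul_le (by positivity) hηyμy ηy _ _ _
  have hsplit_z : α * ⟪zk - zs, a⟫
      = ⟪a, zgk - zfk1⟫ - (1 - α) * ⟪a, zfk - zfk1⟫ - α * ⟪a, zs - zfk1⟫ := by
    have : α • (zk - zs) = (zgk - zfk1) - (1 - α) • (zfk - zfk1) - α • (zs - zfk1) := by
      rw [hzg]; module
    rw [real_inner_comm, ← real_inner_smul_right, this, inner_sub_right, inner_sub_right,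
      real_inner_smul_right, real_inner_smul_right]
  have hsplit_y : α * ⟪yk - ys, b⟫
      = ⟪b, ygk - yfk1⟫ - (1 - α) * ⟪b, yfk - yfk1⟫ - α * ⟪b, ys - yfk1⟫ := by
    have : α • (yk - ys) = (ygk - yfk1) - (1 - α) • (yfk - yfk1) - α • (ys - yfk1) := by
      rw [hyg]; module
    rw [real_inner_comm, ← real_inner_smul_right, this, inner_sub_right, inner_sub_right,
      real_inner_smul_right, real_inner_smul_right]
  have hzf : 0 ≤ ‖zfk - zfk1‖ ^ 2 := sq_nonneg _
  have hyf : 0 ≤ ‖yfk - yfk1‖ ^ 2 := sq_nonneg _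
  have ha : 0 ≤ (6 / 5 - α) * μx * ‖a‖ ^ 2 := by
    have : 0 ≤ 6 / 5 - α := by linarith
    positivity
  have hb : 0 ≤ (θy - 2 * α * ηy) * ‖b‖ ^ 2 := mul_nonneg (by linarith) (sq_nonneg _)
  rw [norm_sub_rev zs, norm_sub_rev ys] at hsub_star
  linear_combination (norm := skip) (2 / μx) * hz + (1 / ηy) * hy - (2 / α) * hsplit_z
    - (2 / α) * hsplit_y + 2 * hsub_star + 2 * (1 - α) / α * hsub_prev + (1 / α) * hcoup
    + (1 / α) * ha + (1 / α) * hb + (1 - α) / (α * μx) * hzf + (1 - α) * μy / α * hyf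
  field_simp
  linarith

end InnerProductSpace

theorem one_div_max_le_min {a b : ℝ} (ha : 0 < a) (hb : 0 < b) :
    1 / max a b ≤ min (1 / a) (1 / b) :=
  le_min (one_div_le_one_div_of_le ha (le_max_left a b))
    (one_div_le_one_div_of_le hb (le_max_right a b))

theorem min_one_div_div_mul {μ θ α : ℝ} (hμ : 0 < μ) (hα : 0 < α) :
    min (1 / (2 * μ)) (θ / (2 * α)) * μ = min (1 / 2) (θ * μ / (2 * α)) := by
  rw [min_mul_of_nonneg _ _ hμ.le]
  congr 1 <;> field_simp

theorem one_div_max_le_min_mul {μ θ α : ℝ} (hμ : 0 < μ) (hθ : 0 < θ) (hα0 : 0 < α)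
    (hα1 : α ≤ 1) :
    1 / max (2 / α) (2 * α / (θ * μ)) ≤ min (α / 2) (min (1 / (2 * μ)) (θ / (2 * α)) * μ) := by
  have h := one_div_max_le_min (a := 2 / α) (b := 2 * α / (θ * μ)) (by positivity)
    (by positivity)
  rw [one_div_div, one_div_div] at h
  have hα : 1 / max (2 / α) (2 * α / (θ * μ)) ≤ α / 2 := h.trans (min_le_left _ _)
  rw [min_one_div_div_mul hμ hα0]
  exact le_min hα (le_min (by linarith) (h.trans (min_le_right _ _)))

/-- Lemma `pp:lem:3` in the paper. Lyapunov contraction for one iteration of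
the accelerated proximal point algorithm. -/
theorem stmt_8 {dx dy : ℕ}
    (μx μy θy α ηz ηy : ℝ) (hμx : 0 < μx) (hμy : 0 < μy) (hθy : 0 < θy)
    (hα0 : 0 < α) (hα1 : α ≤ 1)
    (hηz : ηz = μx / 2) (hηy : ηy = min (1 / (2 * μy)) (θy / (2 * α)))
    (zk zfk zgk zfk1 zk1 zstar xfk1 : EuclideanSpace ℝ (Fin dx))
    (yk yfk ygk yfk1 yk1 ystar wfk1 : EuclideanSpace ℝ (Fin dy))
    (hzg : zgk = α • zk + (1 - α) • zfk)
    (hyg : ygk = α • yk + (1 - α) • yfk)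
    (hzstep : zk1 = zk + (ηz * μx⁻¹) • (zfk1 - zk) - ηz • (xfk1 + μx⁻¹ • zfk1))
    (hystep : yk1 = yk + (ηy * μy) • (yfk1 - yk) - ηy • (wfk1 + μy • yfk1))
    (hinexact :
      (8 / μx) * ‖zfk1 + (μx / 2) • (xfk1 - μx⁻¹ • zgk)‖ ^ 2
          + θy * ‖wfk1 + μy • yfk1 + θy⁻¹ • (yfk1 - ygk)‖ ^ 2
        ≤ (μx / 8) * ‖xfk1 + μx⁻¹ • zgk‖ ^ 2 + θy⁻¹ * ‖yfk1 - ygk‖ ^ 2)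
    (P : EuclideanSpace ℝ (Fin dx) → EuclideanSpace ℝ (Fin dy) → EReal)
    (hPbot : ∀ z y, P z y ≠ ⊥)
    (hfin0 : P zfk yfk < ⊤) (hfin1 : P zfk1 yfk1 < ⊤) (hfinstar : P zstar ystar < ⊤)
    (hmin : ∀ z y, P zstar ystar ≤ P z y)
    (hsubgrad : ∀ z y, P zfk1 yfk1
        + ((⟪xfk1 + μx⁻¹ • zfk1, z - zfk1⟫ + ⟪wfk1 + μy • yfk1, y - yfk1⟫
            + 1 / (2 * μx) * ‖z - zfk1‖ ^ 2 + μy / 2 * ‖y - yfk1‖ ^ 2 : ℝ) : EReal)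
        ≤ P z y) :
    (((1 / ηz) * ‖zk1 - zstar‖ ^ 2 + (1 / ηy) * ‖yk1 - ystar‖ ^ 2 : ℝ) : EReal)
        + ((2 / α : ℝ) : EReal) * (P zfk1 yfk1 - P zstar ystar)
      ≤ ((1 - 1 / max (2 / α) (2 * α / (θy * μy)) : ℝ) : EReal) *
          ((((1 / ηz) * ‖zk - zstar‖ ^ 2 + (1 / ηy) * ‖yk - ystar‖ ^ 2 : ℝ) : EReal)
            + ((2 / α : ℝ) : EReal) * (P zfk yfk - P zstar ystar)) := by
  subst hηz
  have hηy0 : 0 < ηy := hηy ▸ lt_min (by positivity) (by positivity)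
  have hηyμy : ηy * μy ≤ 1 / 2 := by
    rw [hηy, min_one_div_div_mul hμy hα0]
    exact min_le_left _ _
  have hηyθy : 2 * α * ηy ≤ θy := by
    have := hηy ▸ min_le_right (1 / (2 * μy)) (θy / (2 * α))
    rw [le_div_iff₀ (by positivity)] at this
    linarith
  obtain ⟨hmα, hmt⟩ := le_min_iff.1 (hηy ▸ one_div_max_le_min_mul hμy hθy hα0 hα1)
  have hsub_star := hsubgrad zstar ystar
  have hsub_prev := hsubgrad zfk yfk
  have hmin_prev := hmin zfk yfk
  lift P zfk yfk to ℝ using ⟨hfin0.ne, hPbot _ _⟩ with P0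
  lift P zfk1 yfk1 to ℝ using ⟨hfin1.ne, hPbot _ _⟩ with P1
  lift P zstar ystar to ℝ using ⟨hfinstar.ne, hPbot _ _⟩ with Ps
  norm_cast at hsub_star hsub_prev hmin_prev ⊢
  have hstep := lyapunov_step_le hμx hμy hθy hα0 hα1 hηy0 hηyμy hηyθy rfl
    hzg hyg hzstep hystep hinexact hsub_star hsub_prev
  have hgap : 0 ≤ 2 / α * (P0 - Ps) := mul_nonneg (by positivity) (sub_nonneg.2 hmin_prev)
  refine hstep.trans ?_
  rw [mul_add, mul_add]
  gcongr <;> linarith
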